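/- arXiv:1410.8111 — 8 statements merged into one kernel-verified Lean document; each statement's English description precedes it below -/
import Mathlib

section
/- Let L be a model, x ∈ L and α, β < κ. Then (x|_α)|_β = x|_{min{α,β}}, where x|_γ denotes ⨆_γ {x}, the ≤-least element of [x]_γ = {y : y =_γ x}. -/
/-- A *model* (stratified complete lattice) over a fixed nonzero ordinal `κ`:
a complete lattice `(L, ≤)` with a family of preorders `⊑_α` (`α < κ`)
satisfying axioms Ax1–Ax4. -/
structure Model (κ : Ordinal) (L : Type*) [CompleteLattice L] where
  /-- the preorder `⊑_α` -/
  sqle : Ordinal → L → L → Prop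
  refl : ∀ α, α < κ → ∀ x : L, sqle α x x
  trans : ∀ α, α < κ → ∀ x y z : L, sqle α x y → sqle α y z → sqle α x z
  /-- Ax1 -/
  ax1 : ∀ α β, α < β → β < κ → ∀ x y : L, sqle β x y → sqle α x y ∧ sqle α y x
  /-- Ax2 -/
  ax2 : ∀ x y : L, (∀ α, α < κ → sqle α x y ∧ sqle α y x) → x = y
  /-- Ax3 -/
  ax3 : ∀ α, α < κ → ∀ x : L, ∀ X : Set L,
      (∀ y ∈ X, ∀ β, β < α → sqle β x y ∧ sqle β y x) →
      ∃ z : L, (∀ β, β < α → sqle β x z ∧ sqle β z x) ∧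
        (∀ y ∈ X, sqle α y z) ∧
        (∀ y : L, (∀ β, β < α → sqle β x y ∧ sqle β y x) →
          (∀ w ∈ X, sqle α w y) → sqle α z y ∧ z ≤ y)
  /-- Ax4 -/
  ax4 : ∀ α, α < κ → ∀ X : Set L, X.Nonempty → ∀ y : L,
      (∀ x ∈ X, sqle α x y ∧ sqle α y x) →
      sqle α (sSup X) y ∧ sqle α y (sSup X)

namespace Model

variable {κ : Ordinal} {L : Type*} [CompleteLattice L]

/-- `x =_α y` -/
def eqAt (M : Model κ L) (α : Ordinal) (x y : L) : Prop :=
  M.sqle α x y ∧ M.sqle α y x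

/-- The set `(x]_α = {y | x =_β y for all β < α}`. -/
def below (M : Model κ L) (α : Ordinal) (x : L) : Set L :=
  {y | ∀ β, β < α → M.eqAt β x y}

/-- The set `[x]_α = {y | x =_α y}`. -/
def cls (M : Model κ L) (α : Ordinal) (x : L) : Set L :=
  {y | M.eqAt α x y}

/-- `z = ⨆_α X` relative to the basepoint `x` (needed when `X` may be empty):
`z ∈ (x]_α`, `X ⊑_α z`, and `z ⊑_α y` and `z ≤ y` for all `y ∈ (x]_α` with `X ⊑_α y`. -/
def IsLubAt (M : Model κ L) (α : Ordinal) (x : L) (X : Set L) (z : L) : Prop :=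
  z ∈ M.below α x ∧ (∀ y ∈ X, M.sqle α y z) ∧
    ∀ y ∈ M.below α x, (∀ w ∈ X, M.sqle α w y) → M.sqle α z y ∧ z ≤ y

/-- `z = ⨆_α X` for nonempty `X` (basepoint-free form). -/
def IsSupAt (M : Model κ L) (α : Ordinal) (X : Set L) (z : L) : Prop :=
  (∀ y ∈ X, M.sqle α y z) ∧
    ∀ y, (∀ w ∈ X, M.sqle α w y) → M.sqle α z y ∧ z ≤ y

/-- `z = x|_α = ⨆_α {x}`, the `≤`-least element of `[x]_α`. -/
def IsRestrict (M : Model κ L) (α : Ordinal) (x z : L) : Prop :=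
  M.eqAt α x z ∧ ∀ y, M.eqAt α x y → z ≤ y

/-- The global order `⊑`: `x ⊑ y` iff `x = y` or `x ⊏_α y` for some `α < κ`,
where `x ⊏_α y` means `x ⊑_α y` and not `y ⊑_α x`. -/
def sqLe (M : Model κ L) (x y : L) : Prop :=
  x = y ∨ ∃ α, α < κ ∧ M.sqle α x y ∧ ¬ M.sqle α y x

/-- `d` is the `⊑`-least pre-fixed point of `f`. -/
def IsSqLfp (M : Model κ L) (f : L → L) (d : L) : Prop :=
  M.sqLe (f d) d ∧ ∀ y, M.sqLe (f y) y → M.sqLe d y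

/-- `z = f_α x` for `f : L → L` with `x ⊑_α f x`: the unique `z` with
`x ⊑_α z =_α f z`, `z ⊑_α z'` for every `z'` with `x ⊑_α z'` and `f z' ⊑_α z'`,
and `z` the `≤`-least element of `[z]_α`. -/
def IsIterAt (M : Model κ L) (α : Ordinal) (f : L → L) (x z : L) : Prop :=
  M.sqle α x z ∧ M.eqAt α z (f z) ∧
    (∀ z', M.sqle α x z' → M.sqle α (f z') z' → M.sqle α z z') ∧
    (∀ w, M.eqAt α z w → z ≤ w)

/-- `f : L → L'` is `α`-continuous: `α`-monotonic, and for every nonempty linearly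
ordered `J` and `⊑_α`-chain `u : J → L`, `f (⨆_α {u j}) =_α ⨆_α {f (u j)}`. -/
def ContAt {L' : Type*} [CompleteLattice L'] (M : Model κ L) (M' : Model κ L')
    (α : Ordinal) (f : L → L') : Prop :=
  (∀ x y, M.sqle α x y → M'.sqle α (f x) (f y)) ∧
  ∀ (J : Type*) [LinearOrder J] [Nonempty J], ∀ u : J → L,
    (∀ j k : J, j ≤ k → M.sqle α (u j) (u k)) →
    ∀ s, M.IsSupAt α (Set.range u) s →
    ∀ t, M'.IsSupAt α (Set.range fun j => f (u j)) t → M'.eqAt α (f s) t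

end Model

/-- `(x|_α)|_β = x|_{min{α,β}}`. -/
theorem stmt0 {κ : Ordinal} {L : Type*} [CompleteLattice L] (M : Model κ L)
    (hκ : 0 < κ) (x : L) (α β : Ordinal) (hα : α < κ) (hβ : β < κ)
    (z₁ z₂ z₃ : L)
    (h₁ : M.IsRestrict α x z₁) (h₂ : M.IsRestrict β z₁ z₂)
    (h₃ : M.IsRestrict (min α β) x z₃) :
    z₂ = z₃ := by
  have esymm : ∀ γ x y, M.eqAt γ x y → M.eqAt γ y x := fun γ x y h => ⟨h.2, h.1⟩
  have etrans : ∀ γ, γ < κ → ∀ x y z, M.eqAt γ x y → M.eqAt γ y z → M.eqAt γ x z :=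
    fun γ hγ x y z h h' => ⟨M.trans γ hγ x y z h.1 h'.1, M.trans γ hγ z y x h'.2 h.2⟩
  have edown : ∀ γ δ, γ ≤ δ → δ < κ → ∀ x y, M.eqAt δ x y → M.eqAt γ x y := by
    intro γ δ hle hδ x y h
    rcases lt_or_eq_of_le hle with hlt | rfl
    · exact (M.ax1 γ δ hlt hδ x y h.1).imp id (fun _ => (M.ax1 γ δ hlt hδ y x h.2).1)
    · exact h
  rcases le_total β α with hba | hab
  · -- min α β = β
    rw [min_eq_right hba] at h₃
    have hxz₁ : M.eqAt β x z₁ := edown β α hba hα x z₁ h₁.1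
    have hxz₂ : M.eqAt β x z₂ := etrans β hβ x z₁ z₂ hxz₁ h₂.1
    have h23 : z₂ ≤ z₃ := h₂.2 z₃ (etrans β hβ z₁ x z₃ (esymm _ _ _ hxz₁) h₃.1)
    have h32 : z₃ ≤ z₂ := h₃.2 z₂ hxz₂
    exact le_antisymm h23 h32
  · -- min α β = α
    rw [min_eq_left hab] at h₃
    have hz₁z₂ : M.eqAt α z₁ z₂ := edown α β hab hβ z₁ z₂ h₂.1
    have hxz₂ : M.eqAt α x z₂ := etrans α hα x z₁ z₂ h₁.1 hz₁z₂
    have h21 : z₂ ≤ z₁ := h₂.2 z₁ ⟨M.refl β hβ z₁, M.refl β hβ z₁⟩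
    have h13 : z₁ ≤ z₃ := h₁.2 z₃ h₃.1
    have h32 : z₃ ≤ z₂ := h₃.2 z₂ hxz₂
    exact le_antisymm (h21.trans h13) h32
end

section
/- Let L be a model and let (x_α)_{α<κ} be a sequence in L. There exists x ∈ L with x_α = x|_α for all α < κ if and only if the sequence is compatible, i.e. (i) x_α =_α x_β for all α < β < κ, and (ii) for each α < κ, x_α is the ≤-least element of [x_α]_α. In this case x is uniquely determined and x = ⋁_{α<κ} x_α. -/
/-- characterization of the sequences `(x|_α)_{α<κ}` as the
compatible sequences; the element `x` is unique and equals `⋁_{α<κ} x_α`. -/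
theorem stmt2 {κ : Ordinal} {L : Type*} [CompleteLattice L] (M : Model κ L)
    (hκ : 0 < κ) (f : Ordinal → L) :
    ((∃ x : L, ∀ α, α < κ → M.IsRestrict α x (f α)) ↔
      ((∀ α β, α < β → β < κ → M.eqAt α (f α) (f β)) ∧
        ∀ α, α < κ → ∀ y, M.eqAt α (f α) y → f α ≤ y)) ∧
    ∀ x : L, (∀ α, α < κ → M.IsRestrict α x (f α)) → x = sSup (f '' Set.Iio κ) := by
  have fwd : (∃ x : L, ∀ α, α < κ → M.IsRestrict α x (f α)) →
      ((∀ α β, α < β → β < κ → M.eqAt α (f α) (f β)) ∧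
        ∀ α, α < κ → ∀ y, M.eqAt α (f α) y → f α ≤ y) := by
    rintro ⟨x, hx⟩
    constructor
    · intro α β hαβ hβ
      have hα : α < κ := hαβ.trans hβ
      have h1 := (hx α hα).1
      have h2 := (hx β hβ).1
      have h3 : M.eqAt α x (f β) := M.ax1 α β hαβ hβ x (f β) h2.1
      exact ⟨M.trans α hα _ _ _ h1.2 h3.1, M.trans α hα _ _ _ h3.2 h1.1⟩
    · intro α hα y hy
      have h1 := (hx α hα).1
      exact (hx α hα).2 y ⟨M.trans α hα _ _ _ h1.1 hy.1, M.trans α hα _ _ _ hy.2 h1.2⟩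
  have key : ((∀ α β, α < β → β < κ → M.eqAt α (f α) (f β)) ∧
        ∀ α, α < κ → ∀ y, M.eqAt α (f α) y → f α ≤ y) →
      ∀ α, α < κ → M.eqAt α (sSup (f '' Set.Iio κ)) (f α) := by
    rintro ⟨h1, h2⟩ α hα
    have hmono : ∀ β, β < α → f β ≤ f α := fun β hβ =>
      h2 β (hβ.trans hα) (f α) (h1 β α hβ hα)
    have hsup : sSup (f '' Set.Iio κ) = sSup (f '' Set.Ico α κ) := by
      apply le_antisymm
      · apply sSup_le
        rintro _ ⟨β, hβ, rfl⟩
        rcases lt_or_ge β α with h | h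
        · exact (hmono β h).trans (le_sSup ⟨α, ⟨le_refl α, hα⟩, rfl⟩)
        · exact le_sSup ⟨β, ⟨h, hβ⟩, rfl⟩
      · exact sSup_le_sSup (Set.image_mono fun β hβ => hβ.2)
    rw [hsup]
    refine M.ax4 α hα (f '' Set.Ico α κ) ⟨f α, ⟨α, ⟨le_refl α, hα⟩, rfl⟩⟩ (f α) ?_
    rintro _ ⟨β, ⟨hαβ, hβ⟩, rfl⟩
    rcases eq_or_lt_of_le hαβ with rfl | h
    · exact ⟨M.refl α hα _, M.refl α hα _⟩
    · exact ⟨(h1 α β h hβ).2, (h1 α β h hβ).1⟩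
  constructor
  · constructor
    · exact fwd
    · intro hc
      refine ⟨sSup (f '' Set.Iio κ), fun α hα => ?_⟩
      have hk := key hc α hα
      refine ⟨hk, fun y hy => hc.2 α hα y ?_⟩
      exact ⟨M.trans α hα _ _ _ hk.2 hy.1, M.trans α hα _ _ _ hy.2 hk.1⟩
  · intro x hx
    have hc := fwd ⟨x, hx⟩
    apply M.ax2
    intro α hα
    have hk := key hc α hα
    have h1 := (hx α hα).1
    exact ⟨M.trans α hα _ _ _ h1.1 hk.2, M.trans α hα _ _ _ hk.1 h1.2⟩
end

section
/- Let L be a model and let (x_γ)_{γ<κ} be a compatible sequence in L with x = ⋁_{γ<κ} x_γ (so that x =_γ x_γ for all γ < κ). Then for each limit ordinal α < κ, the element y = ⋁_{γ<α} x_γ is both the ≤-least element and a ⊑_α-least element of the set (x]_α = (x_α]_α. -/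
section Aux

variable {κ : Ordinal} {L : Type*} [CompleteLattice L]

lemma eqAt_symm' (M : Model κ L) {α : Ordinal} {x y : L} (h : M.eqAt α x y) :
    M.eqAt α y x := ⟨h.2, h.1⟩

lemma eqAt_trans' (M : Model κ L) {α : Ordinal} (hακ : α < κ) {x y z : L}
    (h1 : M.eqAt α x y) (h2 : M.eqAt α y z) : M.eqAt α x z :=
  ⟨M.trans α hακ x y z h1.1 h2.1, M.trans α hακ z y x h2.2 h1.2⟩

lemma sup_tail (f : Ordinal → L) (β c : Ordinal) (hβ : β < c)
    (hmono : ∀ γ δ, γ ≤ δ → δ < c → f γ ≤ f δ) :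
    sSup (f '' Set.Iio c) = sSup (f '' Set.Ico β c) := by
  apply le_antisymm
  · apply sSup_le
    rintro _ ⟨γ, hγ, rfl⟩
    rcases le_or_gt β γ with h | h
    · exact le_sSup ⟨γ, ⟨h, hγ⟩, rfl⟩
    · exact (hmono γ β h.le hβ).trans (le_sSup ⟨β, ⟨le_rfl, hβ⟩, rfl⟩)
  · exact sSup_le_sSup (Set.image_mono fun γ hγ => hγ.2)

end Aux

/-- for a compatible sequence `(x_γ)_{γ<κ}` with `x = ⋁_{γ<κ} x_γ`
and a limit ordinal `α < κ`, the element `y = ⋁_{γ<α} x_γ` is both the `≤`-least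
and a `⊑_α`-least element of `(x]_α = (x_α]_α`. -/
theorem stmt3 {κ : Ordinal} {L : Type*} [CompleteLattice L] (M : Model κ L)
    (hκ : 0 < κ) (f : Ordinal → L)
    (hcomp₁ : ∀ α β, α < β → β < κ → M.eqAt α (f α) (f β))
    (hcomp₂ : ∀ α, α < κ → ∀ y, M.eqAt α (f α) y → f α ≤ y)
    (x : L) (hx : x = sSup (f '' Set.Iio κ))
    (α : Ordinal) (hα : α < κ) (hlim : Order.IsSuccLimit α)
    (y : L) (hy : y = sSup (f '' Set.Iio α)) :
    M.below α x = M.below α (f α) ∧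
    IsLeast (M.below α x) y ∧
    (y ∈ M.below α x ∧ ∀ w ∈ M.below α x, M.sqle α y w) := by
  -- monotonicity of f below κ
  have hmono : ∀ γ δ, γ ≤ δ → δ < κ → f γ ≤ f δ := by
    intro γ δ hle hδ
    rcases eq_or_lt_of_le hle with rfl | hlt
    · exact le_rfl
    · exact hcomp₂ γ (hlt.trans hδ) (f δ) (hcomp₁ γ δ hlt hδ)
  -- x =_β f β for every β < κ
  have hxβ : ∀ β, β < κ → M.eqAt β x (f β) := by
    intro β hβ
    have hx' : x = sSup (f '' Set.Ico β κ) := by rw [hx, sup_tail f β κ hβ hmono]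
    rw [hx']
    refine M.ax4 β hβ (f '' Set.Ico β κ) ⟨f β, ⟨β, ⟨le_rfl, hβ⟩, rfl⟩⟩ (f β) ?_
    rintro _ ⟨γ, ⟨hβγ, hγκ⟩, rfl⟩
    rcases eq_or_lt_of_le hβγ with rfl | hlt
    · exact ⟨M.refl β hβ _, M.refl β hβ _⟩
    · exact eqAt_symm' M (hcomp₁ β γ hlt hγκ)
  -- y =_β f β for every β < α
  have hyβ : ∀ β, β < α → M.eqAt β y (f β) := by
    intro β hβ
    have hmono' : ∀ γ δ, γ ≤ δ → δ < α → f γ ≤ f δ :=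
      fun γ δ h1 h2 => hmono γ δ h1 (h2.trans hα)
    have hy' : y = sSup (f '' Set.Ico β α) := by rw [hy, sup_tail f β α hβ hmono']
    rw [hy']
    refine M.ax4 β (hβ.trans hα) (f '' Set.Ico β α) ⟨f β, ⟨β, ⟨le_rfl, hβ⟩, rfl⟩⟩ (f β) ?_
    rintro _ ⟨γ, ⟨hβγ, hγα⟩, rfl⟩
    rcases eq_or_lt_of_le hβγ with rfl | hlt
    · exact ⟨M.refl β (hβ.trans hα) _, M.refl β (hβ.trans hα) _⟩
    · exact eqAt_symm' M (hcomp₁ β γ hlt (hγα.trans hα))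
  -- x =_β f α for every β < α
  have hxα : ∀ β, β < α → M.eqAt β x (f α) := by
    intro β hβ
    exact eqAt_trans' M (hβ.trans hα) (hxβ β (hβ.trans hα)) (hcomp₁ β α hβ hα)
  -- the two "below" sets coincide
  have hsets : M.below α x = M.below α (f α) := by
    ext w
    constructor
    · intro hw β hβ
      exact eqAt_trans' M (hβ.trans hα) (eqAt_symm' M (hxα β hβ)) (hw β hβ)
    · intro hw β hβ
      exact eqAt_trans' M (hβ.trans hα) (hxα β hβ) (hw β hβ)
  -- y ∈ (x]_α
  have hymem : y ∈ M.below α x := by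
    intro β hβ
    exact eqAt_trans' M (hβ.trans hα) (hxβ β (hβ.trans hα))
      (eqAt_symm' M (hyβ β hβ))
  -- y is ≤-least in (x]_α
  have hleast : ∀ w ∈ M.below α x, y ≤ w := by
    intro w hw
    rw [hy]
    apply sSup_le
    rintro _ ⟨γ, hγ, rfl⟩
    refine hcomp₂ γ (hγ.trans hα) w ?_
    exact eqAt_trans' M (hγ.trans hα) (eqAt_symm' M (hxβ γ (hγ.trans hα))) (hw γ hγ)
  -- ⊑_α-least element of (x]_α via Ax3 with X = ∅
  obtain ⟨z, hz1, -, hz3⟩ := M.ax3 α hα x ∅ (by simp)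
  have hzmem : z ∈ M.below α x := fun β hβ => hz1 β hβ
  have hzy : z = y := by
    have h1 : z ≤ y := (hz3 y hymem (by simp)).2
    exact le_antisymm h1 (hleast z hzmem)
  refine ⟨hsets, ⟨hymem, hleast⟩, hymem, fun w hw => ?_⟩
  rw [← hzy]
  exact (hz3 w hw (by simp)).1
end

section
/- Suppose (L, ≤) and (L, ⊑_0) are both complete lattice structures on the same set L; for 0 < α < κ let ⊑_α be the equality relation. Then (L, ≤, (⊑_α)_{α<κ}) is a model if and only if one of the following three equivalent conditions holds: (1) for all X ⊆ L and y ∈ L, if x ⊑_0 y for all x ∈ X then ⨆_0 X ≤ y (where ⨆_0 denotes supremum w.r.t. ⊑_0); (2) for all x, y ∈ L, x ⊑_0 y implies x ≤ y; (3) for all X ⊆ L, ⋁X ≤ ⨆_0 X (where ⋁ denotes supremum w.r.t. ≤). In particular, conditions (1), (2) and (3) are mutually equivalent. -/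
/-- two complete-lattice structures on `L`: `≤` and `⊑_0` (given by a
partial order `r` together with a least-upper-bound operation `s0`); `⊑_α` is equality
for `0 < α < κ`.  The resulting structure is a model iff each of the three equivalent
conditions (1), (2), (3) holds. -/
theorem stmt6 {κ : Ordinal} {L : Type*} [CompleteLattice L] (hκ : 0 < κ)
    (r : L → L → Prop)
    (hrefl : ∀ x, r x x)
    (htrans : ∀ x y z, r x y → r y z → r x z)
    (hantisymm : ∀ x y, r x y → r y x → x = y)
    (s0 : Set L → L)
    (hs0 : ∀ X : Set L, (∀ x ∈ X, r x (s0 X)) ∧ ∀ y, (∀ x ∈ X, r x y) → r (s0 X) y) :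
    ((∃ M : Model κ L, M.sqle = fun α x y => if α = 0 then r x y else x = y) ↔
      ∀ X : Set L, ∀ y : L, (∀ x ∈ X, r x y) → s0 X ≤ y) ∧
    ((∀ X : Set L, ∀ y : L, (∀ x ∈ X, r x y) → s0 X ≤ y) ↔
      ∀ x y : L, r x y → x ≤ y) ∧
    ((∀ x y : L, r x y → x ≤ y) ↔ ∀ X : Set L, sSup X ≤ s0 X) := by

  have h12 : (∀ X : Set L, ∀ y : L, (∀ x ∈ X, r x y) → s0 X ≤ y) ↔
      ∀ x y : L, r x y → x ≤ y := by
    constructor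
    · intro h1 x y hxy
      have hx : s0 {x} = x := hantisymm _ _
        ((hs0 {x}).2 x (by simp [hrefl])) ((hs0 {x}).1 x rfl)
      have := h1 {x} y (by simp [hxy])
      rwa [hx] at this
    · intro h2 X y hy
      exact h2 _ _ ((hs0 X).2 y hy)
  have h23 : (∀ x y : L, r x y → x ≤ y) ↔ ∀ X : Set L, sSup X ≤ s0 X := by
    constructor
    · intro h2 X
      exact sSup_le fun x hx => h2 _ _ ((hs0 X).1 x hx)
    · intro h3 x y hxy
      have hxy' : s0 {x, y} = y := hantisymm _ _
        ((hs0 _).2 y (by rintro z (rfl | rfl) <;> first | exact hxy | exact hrefl _))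
        ((hs0 _).1 y (by simp))
      calc x ≤ sSup {x, y} := le_sSup (by simp)
        _ ≤ s0 {x, y} := h3 _
        _ = y := hxy'
  refine ⟨?_, h12, h23⟩
  constructor
  · rintro ⟨M, hM⟩ X y hy
    obtain ⟨z, -, hub, hmin⟩ := M.ax3 0 hκ y X
      (fun w hw β hβ => absurd hβ (by simp))
    have hub' : ∀ w ∈ X, r w z := fun w hw => by
      have := hub w hw; rw [hM] at this; simpa using this
    have hzy : z ≤ y := by
      have := hmin y (fun β hβ => absurd hβ (by simp))
        (fun w hw => by rw [hM]; simpa using hy w hw)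
      exact this.2
    have hzs : r z (s0 X) := by
      have := hmin (s0 X) (fun β hβ => absurd hβ (by simp))
        (fun w hw => by rw [hM]; simpa using (hs0 X).1 w hw)
      rw [hM] at this; simpa using this.1
    have : s0 X = z := hantisymm _ _ ((hs0 X).2 z hub') hzs
    rw [this]; exact hzy
  · intro h1
    have hrfl : ∀ (α : Ordinal) (x : L), (if α = 0 then r x x else x = x) := fun α x => by
      by_cases h : α = 0 <;> simp [h, hrefl]
    refine ⟨⟨fun α x y => if α = 0 then r x y else x = y, ?_, ?_, ?_, ?_, ?_, ?_⟩, rfl⟩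
    · intro α _ x; exact hrfl α x
    · intro α _ x y z hxy hyz
      by_cases h : α = 0 <;> simp only [h, if_true, if_false, reduceIte] at hxy hyz ⊢
      · exact htrans _ _ _ hxy hyz
      · exact hxy.trans hyz
    · intro α β hαβ hβ x y h
      have hβ0 : β ≠ 0 := (hαβ.trans_le' (zero_le (a := α))).ne'
      simp only [hβ0, if_false, reduceIte] at h
      subst h
      exact ⟨hrfl α x, hrfl α x⟩
    · intro x y h
      have := h 0 hκ
      simp only [if_pos rfl] at this
      exact hantisymm _ _ this.1 this.2
    · intro α hα x X hX
      by_cases hα0 : α = 0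
      · subst hα0
        refine ⟨s0 X, fun β hβ => absurd hβ (by simp), ?_, ?_⟩
        · intro w hw; simpa using (hs0 X).1 w hw
        · intro y _ hw
          simp only [if_pos rfl] at hw ⊢
          exact ⟨(hs0 X).2 y hw, h1 X y hw⟩
      · have hαpos : (0 : Ordinal) < α := pos_iff_ne_zero.mpr hα0
        refine ⟨x, fun β hβ => ⟨hrfl β x, hrfl β x⟩, ?_, ?_⟩
        · intro w hw
          have h0 := hX w hw 0 hαpos
          simp only [if_pos rfl] at h0
          have : x = w := hantisymm _ _ h0.1 h0.2
          simp only [hα0, if_false, reduceIte]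
          exact this.symm
        · intro y hy hw
          have h0 := hy 0 hαpos
          simp only [if_pos rfl] at h0
          have hxy : x = y := hantisymm _ _ h0.1 h0.2
          subst hxy
          exact ⟨hrfl α x, le_rfl⟩
    · intro α hα X hXne y hXy
      have hX : X = {y} := by
        rw [Set.eq_singleton_iff_nonempty_unique_mem]
        refine ⟨hXne, fun x hx => ?_⟩
        have h0 := hXy x hx
        by_cases h : α = 0 <;> simp only [h, if_true, if_false, reduceIte] at h0
        · exact hantisymm _ _ h0.1 h0.2
        · exact h0.1
      subst hX
      rw [sSup_singleton]
      exact ⟨hrfl α y, hrfl α y⟩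
end

section
/- Let L, L' be models, α < κ, and let f : L × L' → L be α-monotonic (for the pointwise preorder ⊑_α on L × L'). If x ∈ L and y ∈ L' satisfy x ⊑_α f(x,y), then there exists z ∈ L with: (i) x ⊑_α z =_α f(z,y); (ii) for all z' ∈ L, if x ⊑_α z' and f(z',y) ⊑_α z' then z ⊑_α z'; (iii) z is the ≤-least element of [z]_α, and if α+1 < κ then z is also a ⊑_{α+1}-least element of [z]_α. Moreover z is uniquely determined by x, y and α. -/
/-- existence and uniqueness of `f_α(x,y)` for an `α`-monotonic
`f : L × L' → L` and `x ⊑_α f(x,y)`. -/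
theorem stmt9 {κ : Ordinal} {L L' : Type*} [CompleteLattice L] [CompleteLattice L']
    (M : Model κ L) (M' : Model κ L') (α : Ordinal) (hα : α < κ)
    (f : L × L' → L)
    (hf : ∀ p q : L × L', M.sqle α p.1 q.1 → M'.sqle α p.2 q.2 → M.sqle α (f p) (f q))
    (x : L) (y : L') (hxy : M.sqle α x (f (x, y))) :
    ∃! z : L,
      M.sqle α x z ∧ M.eqAt α z (f (z, y)) ∧
      (∀ z' : L, M.sqle α x z' → M.sqle α (f (z', y)) z' → M.sqle α z z') ∧
      (∀ w, M.eqAt α z w → z ≤ w) ∧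
      (α + 1 < κ → ∀ w, M.eqAt α z w → M.sqle (α + 1) z w) := by
  classical
  have tr := M.trans α hα
  have rf := M.refl α hα
  have hg : ∀ a b : L, M.sqle α a b → M.sqle α (f (a, y)) (f (b, y)) := fun a b h =>
    hf (a, y) (b, y) h (M'.refl α hα y)
  set X : Set L := {w | M.sqle α x w ∧ M.sqle α w (f (w, y)) ∧
    ∀ z', M.sqle α x z' → M.sqle α (f (z', y)) z' → M.sqle α w z'} with hX
  obtain ⟨z, hz1, hz2, hz3⟩ := M.ax3 α hα x X
    (fun w hw β hβ => M.ax1 β α hβ hα x w hw.1)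
  have hxX : x ∈ X := ⟨rf x, hxy, fun z' h1 _ => h1⟩
  have hxz : M.sqle α x z := hz2 x hxX
  have hxgz : M.sqle α x (f (z, y)) := tr _ _ _ hxy (hg _ _ hxz)
  have hzgz := hz3 (f (z, y)) (fun β hβ => M.ax1 β α hβ hα x _ hxgz)
    (fun w hw => tr _ _ _ hw.2.1 (hg _ _ (hz2 w hw)))
  have hleast : ∀ z', M.sqle α x z' → M.sqle α (f (z', y)) z' → M.sqle α z z' := by
    intro z' h1 h2
    exact (hz3 z' (fun β hβ => M.ax1 β α hβ hα x z' h1)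
      (fun w hw => hw.2.2 z' h1 h2)).1
  have hgzX : f (z, y) ∈ X := ⟨hxgz, hg _ _ hzgz.1,
    fun z' h1 h2 => tr _ _ _ (hg _ _ (hleast z' h1 h2)) h2⟩
  have heq : M.eqAt α z (f (z, y)) := ⟨hzgz.1, hz2 _ hgzX⟩
  have hle : ∀ w, M.eqAt α z w → M.sqle α z w ∧ z ≤ w := by
    intro w hw
    have hxw : M.sqle α x w := tr _ _ _ hxz hw.1
    exact hz3 w (fun β hβ => M.ax1 β α hβ hα x w hxw)
      (fun w' hw' => tr _ _ _ (hz2 w' hw') hw.1)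
  have hsucc : α + 1 < κ → ∀ w, M.eqAt α z w → M.sqle (α + 1) z w := by
    intro hκ w hw
    obtain ⟨z₀, hz₀1, -, hz₀3⟩ := M.ax3 (α + 1) hκ z ∅ (by simp)
    have hαs : α < α + 1 := lt_add_one α
    have hmin : ∀ v, (∀ β, β < α + 1 → M.eqAt β z v) →
        M.sqle (α + 1) z₀ v ∧ z₀ ≤ v := fun v hv => hz₀3 v hv (by simp)
    have hzz0 : M.eqAt α z z₀ := hz₀1 α hαs
    have hz0z := hmin z (fun β hβ => ⟨M.refl β (hβ.trans hκ) z, M.refl β (hβ.trans hκ) z⟩)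
    have hzez0 : z = z₀ := le_antisymm (hle z₀ hzz0).2 hz0z.2
    have hzw : ∀ β, β < α + 1 → M.eqAt β z w := by
      intro β hβ
      rcases lt_or_eq_of_le (Order.lt_succ_iff.mp hβ) with h | h
      · exact M.ax1 β α h hα z w hw.1
      · subst h; exact hw
    have := (hmin w hzw).1
    rwa [← hzez0] at this
  refine ⟨z, ⟨hxz, heq, hleast, fun w hw => (hle w hw).2, hsucc⟩, ?_⟩
  intro z' ⟨h1, h2, h3, h4, _⟩
  have hz'z : M.sqle α z' z := h3 z hxz heq.2
  have hzz' : M.sqle α z z' := hleast z' h1 h2.2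
  exact le_antisymm (h4 z ⟨hz'z, hzz'⟩) (hle z' ⟨hzz', hz'z⟩).2
end

section
/- Let L, L' be models, α < κ, and let f : L × L' → L be α-monotonic. Suppose x, x' ∈ L and y, y' ∈ L' with x ⊑_α x', y ⊑_α y', x ⊑_α f(x,y) and x' ⊑_α f(x',y'). Let z = f_α(x,y) and z' = f_α(x',y'). Then z ⊑_α z'. If moreover x =_α x' and y =_α y', then z =_α z', and in fact z = z'. -/
/-- monotonicity of `(x, y) ↦ f_α(x, y)`. -/
theorem stmt10 {κ : Ordinal} {L L' : Type*} [CompleteLattice L] [CompleteLattice L']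
    (M : Model κ L) (M' : Model κ L') (α : Ordinal) (hα : α < κ)
    (f : L × L' → L)
    (hf : ∀ p q : L × L', M.sqle α p.1 q.1 → M'.sqle α p.2 q.2 → M.sqle α (f p) (f q))
    (x x' : L) (y y' : L')
    (hxx' : M.sqle α x x') (hyy' : M'.sqle α y y')
    (hx : M.sqle α x (f (x, y))) (hx' : M.sqle α x' (f (x', y')))
    (z z' : L)
    (hz : M.IsIterAt α (fun u => f (u, y)) x z)
    (hz' : M.IsIterAt α (fun u => f (u, y')) x' z') :
    M.sqle α z z' ∧
      (M.eqAt α x x' → M'.eqAt α y y' → M.eqAt α z z' ∧ z = z') := by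
  obtain ⟨hxz, hzf, hmin, hleast⟩ := hz
  obtain ⟨hxz', hzf', hmin', hleast'⟩ := hz'
  have h1 : M.sqle α z z' := by
    apply hmin z' (M.trans α hα _ _ _ hxx' hxz')
    exact M.trans α hα _ _ _ (hf (z', y) (z', y') (M.refl α hα z') hyy') hzf'.2
  refine ⟨h1, fun hxx hyy => ?_⟩
  have h2 : M.sqle α z' z := by
    apply hmin' z (M.trans α hα _ _ _ hxx.2 hxz)
    exact M.trans α hα _ _ _ (hf (z, y') (z, y) (M.refl α hα z) hyy.2) hzf.2
  exact ⟨⟨h1, h2⟩, le_antisymm (hleast z' ⟨h1, h2⟩) (hleast' z ⟨h2, h1⟩)⟩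
end

section
/- Let L, L' be models, let f : L → L' and g : L' → L be α-monotonic for all α < κ, and set h = g ∘ f and k = f ∘ g. Let α < κ and suppose x ∈ L and x' ∈ L' satisfy x ⊑_α g x' and x' ⊑_α f x (so that y = h_α x and y' = k_α x' exist). Then y =_α g y' and y' =_α f y. -/
/-- for `f : L → L'`, `g : L' → L` `α`-monotonic for all `α < κ`,
`h = g ∘ f`, `k = f ∘ g`, if `x ⊑_α g x'` and `x' ⊑_α f x`, then
`h_α x =_α g (k_α x')` and `k_α x' =_α f (h_α x)`. -/
theorem stmt15 {κ : Ordinal} {L L' : Type*} [CompleteLattice L] [CompleteLattice L']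
    (M : Model κ L) (M' : Model κ L')
    (f : L → L') (g : L' → L)
    (hf : ∀ α, α < κ → ∀ x y : L, M.sqle α x y → M'.sqle α (f x) (f y))
    (hg : ∀ α, α < κ → ∀ x y : L', M'.sqle α x y → M.sqle α (g x) (g y))
    (α : Ordinal) (hα : α < κ)
    (x : L) (x' : L')
    (hx : M.sqle α x (g x')) (hx' : M'.sqle α x' (f x))
    (y : L) (y' : L')
    (hy : M.IsIterAt α (g ∘ f) x y) (hy' : M'.IsIterAt α (f ∘ g) x' y') :
    M.eqAt α y (g y') ∧ M'.eqAt α y' (f y) := by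
  obtain ⟨hxy, hyhy, ymin, -⟩ := hy
  obtain ⟨hx'y', hy'ky', y'min, -⟩ := hy'
  have h1 : M'.sqle α y' (f y) :=
    y'min (f y) (M'.trans α hα _ _ _ hx' (hf α hα _ _ hxy)) (hf α hα _ _ hyhy.2)
  have h2 : M.sqle α y (g y') :=
    ymin (g y') (M.trans α hα _ _ _ hx (hg α hα _ _ hx'y')) (hg α hα _ _ hy'ky'.2)
  have h3 : M'.sqle α (f y) y' :=
    M'.trans α hα _ _ _ (hf α hα _ _ h2) hy'ky'.2
  have h4 : M.sqle α (g y') y :=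
    M.trans α hα _ _ _ (hg α hα _ _ h1) hyhy.2
  exact ⟨⟨h2, h4⟩, ⟨h1, h3⟩⟩
end

section
/- Let L, L' be models where L satisfies Ax5 (for every α < κ and every family (x_i)_{i∈I}, (y_i)_{i∈I} in L with x_i ⊑_α y_i for all i, one has ⋁{x_i : i∈I} ⊑_α ⋁{y_i : i∈I}). Then the set of functions L' → L that are α-monotonic for all α < κ, with pointwise orders, is closed under the model operations: (a) for every set G of such functions, the pointwise supremum f defined by f x = ⋁_{g∈G} g x is α-monotonic for all α < κ; and (b) if ḡ : L' → L is α-monotonic for all α < κ, γ < κ, and G is a set of such functions with g x =_β ḡ x for all g ∈ G, x ∈ L' and β < γ, then the pointwise supremum f x = ⨆_γ {g x : g ∈ G} is α-monotonic for all α < κ. -/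
/-- Full (arbitrary-index) Ax5 follows from binary Ax5 together with Ax1-Ax4. -/
lemma Model.bigAx5 {κ : Ordinal} {L : Type*} [CompleteLattice L] (M : Model κ L)
    (hbin : ∀ α, α < κ → ∀ a b c d : L, M.sqle α a b → M.sqle α c d →
      M.sqle α (a ⊔ c) (b ⊔ d)) :
    ∀ α, α < κ → ∀ (I : Type*) (x y : I → L),
      (∀ i, M.sqle α (x i) (y i)) → M.sqle α (⨆ i, x i) (⨆ i, y i) := by
  intro α
  induction α using Ordinal.induction with
  | h α IH =>
  intro hα I x y hxy
  by_cases hI : Nonempty I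
  · set s := ⨆ i, x i with hs
    set t := ⨆ i, y i with ht
    -- s =_β t for all β < α (by the induction hypothesis)
    have hst : ∀ β, β < α → M.eqAt β s t := by
      intro β hβ
      have hβκ := hβ.trans hα
      exact ⟨IH β hβ hβκ I x y (fun i => (M.ax1 β α hβ hα _ _ (hxy i)).1),
             IH β hβ hβκ I y x (fun i => (M.ax1 β α hβ hα _ _ (hxy i)).2)⟩
    -- restrictions: for each i there is z with z ⊑_α x i and z ≤ y i
    have hz : ∀ i, ∃ z, M.sqle α z (x i) ∧ z ≤ y i := by
      intro i
      obtain ⟨z, _, _, hz3⟩ := M.ax3 α hα (x i) {x i}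
        (by rintro w rfl β hβ; exact ⟨M.refl β (hβ.trans hα) _, M.refl β (hβ.trans hα) _⟩)
      have h1 := hz3 (x i) (fun β hβ => ⟨M.refl β (hβ.trans hα) _, M.refl β (hβ.trans hα) _⟩)
        (by rintro w rfl; exact M.refl α hα _)
      have h2 := hz3 (y i) (fun β hβ => M.ax1 β α hβ hα _ _ (hxy i))
        (by rintro w rfl; exact hxy i)
      exact ⟨z, h1.1, h2.2⟩
    -- each x i ⊔ t is =_α t
    have hxt : ∀ i, M.eqAt α (x i ⊔ t) t := by
      intro i
      constructor
      · have := hbin α hα (x i) (y i) t t (hxy i) (M.refl α hα t)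
        rwa [sup_eq_right.mpr (le_iSup y i)] at this
      · obtain ⟨z, hz1, hz2⟩ := hz i
        have := hbin α hα t t z (x i) (M.refl α hα t) hz1
        rwa [sup_eq_left.mpr (hz2.trans (le_iSup y i)), sup_comm t (x i)] at this
    -- hence s ⊔ t =_α t, by Ax4
    have hst4 : M.eqAt α (s ⊔ t) t := by
      have hne : (Set.range fun i => x i ⊔ t).Nonempty := Set.range_nonempty _
      have := M.ax4 α hα _ hne t (by rintro w ⟨i, rfl⟩; exact hxt i)
      have hrange : sSup (Set.range fun i => x i ⊔ t) = s ⊔ t := by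
        rw [sSup_range, iSup_sup]
      rw [hrange] at this
      exact this
    -- s ⊑_α s ⊔ t, via the ⊑_α-bottom of the class of s ⊔ t
    have hD : M.sqle α s (s ⊔ t) := by
      have hbelow : ∀ β, β < α → M.eqAt β (s ⊔ t) s := by
        intro β hβ
        have hβκ := hβ.trans hα
        have h1 : M.eqAt β (s ⊔ t) t :=
          ⟨by have := hbin β hβκ s t t t (hst β hβ).1 (M.refl β hβκ t); rwa [sup_idem] at this,
           by have := hbin β hβκ t s t t (hst β hβ).2 (M.refl β hβκ t); rwa [sup_idem] at this⟩
        exact ⟨M.trans β hβκ _ _ _ h1.1 (hst β hβ).2, M.trans β hβκ _ _ _ (hst β hβ).1 h1.2⟩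
      obtain ⟨w, _, _, hw3⟩ := M.ax3 α hα (s ⊔ t) (∅ : Set L) (by rintro w ⟨⟩)
      have hws := hw3 s hbelow (by rintro w ⟨⟩)
      have hwst := hw3 (s ⊔ t)
        (fun β hβ => ⟨M.refl β (hβ.trans hα) _, M.refl β (hβ.trans hα) _⟩) (by rintro w ⟨⟩)
      have := hbin α hα s s w (s ⊔ t) (M.refl α hα s) hwst.1
      rwa [sup_eq_left.mpr hws.2, sup_eq_right.mpr le_sup_left] at this
    exact M.trans α hα _ _ _ hD hst4.1
  · have : IsEmpty I := not_nonempty_iff.mp hI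
    rw [iSup_of_empty, iSup_of_empty]
    exact M.refl α hα ⊥

/-- if `L` satisfies Ax5, then the `∀α`-monotonic functions `L' → L`
are closed under (a) pointwise suprema `⋁` and (b) pointwise `⨆_γ`-suprema taken
over sets `G` with `g x =_β ḡ x` for all `g ∈ G`, `x` and `β < γ`. -/
theorem stmt19 {κ : Ordinal} {L L' : Type*} [CompleteLattice L] [CompleteLattice L']
    (M : Model κ L) (M' : Model κ L') (hκ : 0 < κ)
    (hAx5 : ∀ α, α < κ → ∀ (I : Type*) (x y : I → L),
      (∀ i, M.sqle α (x i) (y i)) → M.sqle α (⨆ i, x i) (⨆ i, y i)) :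
    (∀ G : Set (L' → L),
      (∀ g ∈ G, ∀ α, α < κ → ∀ u v : L', M'.sqle α u v → M.sqle α (g u) (g v)) →
      ∀ α, α < κ → ∀ u v : L', M'.sqle α u v →
        M.sqle α (sSup ((fun g => g u) '' G)) (sSup ((fun g => g v) '' G))) ∧
    (∀ gbar : L' → L,
      (∀ α, α < κ → ∀ u v : L', M'.sqle α u v → M.sqle α (gbar u) (gbar v)) →
      ∀ γ, γ < κ → ∀ G : Set (L' → L),
        (∀ g ∈ G, ∀ α, α < κ → ∀ u v : L', M'.sqle α u v → M.sqle α (g u) (g v)) →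
        (∀ g ∈ G, ∀ x : L', ∀ β, β < γ → M.eqAt β (gbar x) (g x)) →
        ∀ f : L' → L,
          (∀ x : L', M.IsLubAt γ (gbar x) ((fun g => g x) '' G) (f x)) →
          ∀ α, α < κ → ∀ u v : L', M'.sqle α u v → M.sqle α (f u) (f v)) := by
  constructor
  · -- derive binary Ax5 from hAx5 (at index type `ULift Bool`)
    have iSup_pair : ∀ p q : L, (⨆ i : ULift Bool, (if i.down then p else q)) = p ⊔ q := by
      intro p q
      apply le_antisymm
      · exact iSup_le fun i => by rcases i with ⟨b⟩; cases b <;> simp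
      · exact sup_le (le_iSup_of_le ⟨true⟩ (by simp)) (le_iSup_of_le ⟨false⟩ (by simp))
    have hbin : ∀ α, α < κ → ∀ a b c d : L, M.sqle α a b → M.sqle α c d →
        M.sqle α (a ⊔ c) (b ⊔ d) := by
      intro α hα a b c d h1 h2
      have := hAx5 α hα (ULift Bool) (fun i => if i.down then a else c)
        (fun i => if i.down then b else d)
        (fun i => by rcases i with ⟨b'⟩; cases b' <;> simpa)
      rwa [iSup_pair, iSup_pair] at this
    intro G hG α hα u v huv
    rw [sSup_image', sSup_image']
    exact M.bigAx5 hbin α hα G.Elem (fun g => g.1 u) (fun g => g.1 v)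
      (fun g => hG g.1 g.2 α hα u v huv)
  · intro gbar hgbar γ hγ G hG hGβ f hf α hα u v huv
    -- key lemma: if u ⊑_γ v then f u ⊑_γ f v
    have key : ∀ u v : L', M'.sqle γ u v → M.sqle γ (f u) (f v) ∧ f u ≤ f v := by
      intro u v huv
      obtain ⟨hb_u, hub_u, hmin_u⟩ := hf u
      obtain ⟨hb_v, hub_v, hmin_v⟩ := hf v
      have hfv_below : f v ∈ M.below γ (gbar u) := by
        intro β hβ
        have h1 : M.eqAt β (gbar u) (gbar v) := by
          have := hgbar γ hγ u v huv
          have := M.ax1 β γ hβ hγ _ _ this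
          exact this
        have h2 : M.eqAt β (gbar v) (f v) := hb_v β hβ
        have hβκ : β < κ := hβ.trans hγ
        exact ⟨M.trans β hβκ _ _ _ h1.1 h2.1, M.trans β hβκ _ _ _ h2.2 h1.2⟩
      have hub : ∀ w ∈ (fun g => g u) '' G, M.sqle γ w (f v) := by
        rintro w ⟨g, hg, rfl⟩
        have h1 : M.sqle γ (g u) (g v) := hG g hg γ hγ u v huv
        have h2 : M.sqle γ (g v) (f v) := hub_v (g v) ⟨g, hg, rfl⟩
        exact M.trans γ hγ _ _ _ h1 h2
      exact hmin_u (f v) hfv_below hub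
    rcases lt_trichotomy α γ with hlt | rfl | hgt
    · -- α < γ: f u =_α gbar u ⊑_α gbar v =_α f v
      obtain ⟨hb_u, _, _⟩ := hf u
      obtain ⟨hb_v, _, _⟩ := hf v
      have h1 := (hb_u α hlt).2
      have h2 := hgbar α hα u v huv
      have h3 := (hb_v α hlt).1
      exact M.trans α hα _ _ _ h1 (M.trans α hα _ _ _ h2 h3)
    · exact (key u v huv).1
    · -- α > γ: u =_γ v, so f u = f v
      have huv' : M'.sqle γ u v ∧ M'.sqle γ v u := M'.ax1 γ α hgt hα u v huv
      have h1 := key u v huv'.1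
      have h2 := key v u huv'.2
      have : f u = f v := le_antisymm h1.2 h2.2
      rw [this]
      exact M.refl α hα _
end
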